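/- arXiv:nlin/0412064 — 4 statements merged into one kernel-verified Lean document; each statement's English description precedes it below -/
import Mathlib

section
/- Let V be a smooth (1,1)-tensor field on an open set of ℝᵐ which at every point has m distinct real eigenvalues, with smooth eigenvalue functions μ¹,...,μᵐ and smooth eigenvector fields X₁,...,Xₘ (VXᵢ = μⁱXᵢ). If for every pair i ≠ j the Nijenhuis tensor value N(Xᵢ, Xⱼ) lies in the span of Xᵢ and Xⱼ at every point, then the Haantjes tensor of V vanishes identically. -/
/-- Partial derivative with respect to the p-th coordinate. -/
noncomputable def pd {m : ℕ} (f : (Fin m → ℝ) → ℝ) (x : Fin m → ℝ) (p : Fin m) : ℝ :=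
  fderiv ℝ f x (Pi.single p 1)

/-- Lie bracket of vector fields on (an open subset of) ℝᵐ. -/
noncomputable def bracket {m : ℕ} (X Y : (Fin m → ℝ) → (Fin m → ℝ)) :
    (Fin m → ℝ) → (Fin m → ℝ) :=
  fun x i => ∑ j, (X x j * pd (fun y => Y y i) x j - Y x j * pd (fun y => X y i) x j)

/-- Pointwise action of the (1,1)-tensor field v on a vector field. -/
def vapp {m : ℕ} (v : (Fin m → ℝ) → Fin m → Fin m → ℝ)
    (X : (Fin m → ℝ) → (Fin m → ℝ)) : (Fin m → ℝ) → (Fin m → ℝ) :=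
  fun x i => ∑ j, v x i j * X x j

/-- The Nijenhuis tensor in invariant form: N(X,Y) = [VX,VY] + V²[X,Y] − V[X,VY] − V[VX,Y]. -/
noncomputable def nInv {m : ℕ} (v : (Fin m → ℝ) → Fin m → Fin m → ℝ)
    (X Y : (Fin m → ℝ) → (Fin m → ℝ)) : (Fin m → ℝ) → (Fin m → ℝ) :=
  bracket (vapp v X) (vapp v Y) + vapp v (vapp v (bracket X Y))
    - vapp v (bracket X (vapp v Y)) - vapp v (bracket (vapp v X) Y)

/-- The Haantjes tensor in invariant form:
H(X,Y) = V²N(X,Y) − VN(VX,Y) − VN(X,VY) + N(VX,VY). -/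
noncomputable def hInv {m : ℕ} (v : (Fin m → ℝ) → Fin m → Fin m → ℝ)
    (X Y : (Fin m → ℝ) → (Fin m → ℝ)) : (Fin m → ℝ) → (Fin m → ℝ) :=
  vapp v (vapp v (nInv v X Y)) - vapp v (nInv v (vapp v X) Y)
    - vapp v (nInv v X (vapp v Y)) + nInv v (vapp v X) (vapp v Y)

section
variable {m : ℕ} {f g : (Fin m → ℝ) → ℝ} {x : Fin m → ℝ} {p : Fin m}

lemma pd_add (hf : DifferentiableAt ℝ f x) (hg : DifferentiableAt ℝ g x) :
    pd (fun y => f y + g y) x p = pd f x p + pd g x p := by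
  rw [pd, pd, pd, show (fun y => f y + g y) = f + g from rfl, (hf.hasFDerivAt.add hg.hasFDerivAt).fderiv]; rfl

lemma pd_mul (hf : DifferentiableAt ℝ f x) (hg : DifferentiableAt ℝ g x) :
    pd (fun y => f y * g y) x p = f x * pd g x p + pd f x p * g x := by
  rw [pd, pd, pd, show (fun y => f y * g y) = f * g from rfl, (hf.hasFDerivAt.mul hg.hasFDerivAt).fderiv]
  simp only [ContinuousLinearMap.add_apply, ContinuousLinearMap.smul_apply, smul_eq_mul]; ring

/-- Smooth vector field predicate. -/
def SF {m : ℕ} (X : (Fin m → ℝ) → (Fin m → ℝ)) : Prop := ∀ p, ContDiff ℝ (⊤ : ℕ∞) (fun y => X y p)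

lemma SF.diff {X : (Fin m → ℝ) → (Fin m → ℝ)} (h : SF X) (p : Fin m) :
    DifferentiableAt ℝ (fun y => X y p) x := ((h p).differentiable (by simp)).differentiableAt

variable {v : (Fin m → ℝ) → Fin m → Fin m → ℝ} {X Y X' : (Fin m → ℝ) → (Fin m → ℝ)}

lemma SF.vapp (hv : ∀ i j, ContDiff ℝ (⊤ : ℕ∞) (fun y => v y i j)) (hX : SF X) : SF (vapp v X) := by
  intro p
  show ContDiff ℝ (⊤ : ℕ∞) fun y => ∑ j, v y p j * X y j
  exact ContDiff.sum fun j _ => (hv p j).mul (hX j)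

lemma SF.smulF (hf : ContDiff ℝ (⊤ : ℕ∞) f) (hX : SF X) : SF (fun y => f y • X y) :=
  fun p => hf.mul (hX p)

lemma SF.addF (hX : SF X) (hX' : SF X') : SF (fun y => X y + X' y) :=
  fun p => (hX p).add (hX' p)

lemma vapp_smul_fun : vapp v (fun y => f y • X y) = fun y => f y • vapp v X y := by
  funext y i
  simp only [vapp, Pi.smul_apply, smul_eq_mul, Finset.mul_sum]
  exact Finset.sum_congr rfl fun j _ => by ring

lemma vapp_add_fun : vapp v (fun y => X y + Y y) = fun y => vapp v X y + vapp v Y y := by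
  funext y i
  simp only [vapp, Pi.add_apply]
  rw [← Finset.sum_add_distrib]
  exact Finset.sum_congr rfl fun j _ => by ring

/-- vapp depends only on the pointwise value. -/
lemma vapp_congr (h : X x = Y x) : vapp v X x = vapp v Y x := by
  funext i; simp only [vapp, h]

lemma vapp_pt_smul (c : ℝ) (hXY : X x = c • Y x) : vapp v X x = c • vapp v Y x := by
  funext i
  simp only [vapp, hXY, Pi.smul_apply, smul_eq_mul, Finset.mul_sum]
  exact Finset.sum_congr rfl fun j _ => by ring

lemma vapp_pt_add (hXY : X x = X' x + Y x) : vapp v X x = vapp v X' x + vapp v Y x := by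
  funext i
  simp only [vapp, hXY, Pi.add_apply]
  rw [← Finset.sum_add_distrib]
  exact Finset.sum_congr rfl fun j _ => by ring

lemma bracket_skew : bracket X Y x = - bracket Y X x := by
  funext i
  simp only [bracket, Pi.neg_apply, ← Finset.sum_neg_distrib]
  exact Finset.sum_congr rfl fun j _ => by ring

lemma bracket_add_left (hX : SF X) (hX' : SF X') :
    bracket (fun y => X y + X' y) Y x = bracket X Y x + bracket X' Y x := by
  funext i
  simp only [bracket, Pi.add_apply, ← Finset.sum_add_distrib]
  refine Finset.sum_congr rfl fun j _ => ?_
  rw [pd_add (hX.diff i) (hX'.diff i)]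
  ring

lemma bracket_smul_left (hf : ContDiff ℝ (⊤ : ℕ∞) f) (hX : SF X) :
    bracket (fun y => f y • X y) Y x
      = f x • bracket X Y x - (∑ j, Y x j * pd f x j) • X x := by
  funext i
  simp only [bracket, Pi.smul_apply, Pi.sub_apply, smul_eq_mul, Finset.mul_sum,
    Finset.sum_mul, ← Finset.sum_sub_distrib]
  refine Finset.sum_congr rfl fun j _ => ?_
  rw [pd_mul (((hf).differentiable (by simp)).differentiableAt) (hX.diff i)]
  ring

end

section
open Matrix
variable {m : ℕ} {f : (Fin m → ℝ) → ℝ} {x : Fin m → ℝ}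
variable {v : (Fin m → ℝ) → Fin m → Fin m → ℝ} {X Y X' Y' : (Fin m → ℝ) → (Fin m → ℝ)}

lemma vapp_eq : vapp v X x = Matrix.of (v x) *ᵥ (X x) := rfl

lemma nInv_eq : nInv v X Y x
    = bracket (vapp v X) (vapp v Y) x
      + Matrix.of (v x) *ᵥ (Matrix.of (v x) *ᵥ bracket X Y x)
      - Matrix.of (v x) *ᵥ bracket X (vapp v Y) x
      - Matrix.of (v x) *ᵥ bracket (vapp v X) Y x := rfl

lemma nInv_skew : nInv v X Y x = - nInv v Y X x := by
  rw [nInv_eq, nInv_eq, bracket_skew (X := vapp v X), bracket_skew (X := X),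
    bracket_skew (X := X) (Y := vapp v Y), bracket_skew (X := vapp v X) (Y := Y)]
  simp only [Matrix.mulVec_neg]
  abel

lemma nInv_add_left (hv : ∀ i j, ContDiff ℝ (⊤ : ℕ∞) (fun y => v y i j))
    (hX : SF X) (hX' : SF X') :
    nInv v (fun y => X y + X' y) Y x = nInv v X Y x + nInv v X' Y x := by
  rw [nInv_eq, nInv_eq, nInv_eq, vapp_add_fun,
    bracket_add_left (hX.vapp hv) (hX'.vapp hv),
    bracket_add_left hX hX', bracket_add_left hX hX',
    bracket_add_left (hX.vapp hv) (hX'.vapp hv)]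
  simp only [Matrix.mulVec_add]
  abel

lemma nInv_smul_left (hv : ∀ i j, ContDiff ℝ (⊤ : ℕ∞) (fun y => v y i j))
    (hf : ContDiff ℝ (⊤ : ℕ∞) f) (hX : SF X) :
    nInv v (fun y => f y • X y) Y x = f x • nInv v X Y x := by
  rw [nInv_eq, nInv_eq, vapp_smul_fun,
    bracket_smul_left hf (hX.vapp hv),
    bracket_smul_left hf hX, bracket_smul_left hf hX,
    bracket_smul_left hf (hX.vapp hv)]
  simp only [Matrix.mulVec_sub, Matrix.mulVec_smul, ← vapp_eq]
  simp only [smul_sub, smul_add]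
  abel

lemma nInv_add_right (hv : ∀ i j, ContDiff ℝ (⊤ : ℕ∞) (fun y => v y i j))
    (hY : SF Y) (hY' : SF Y') :
    nInv v X (fun y => Y y + Y' y) x = nInv v X Y x + nInv v X Y' x := by
  rw [nInv_skew, nInv_add_left hv hY hY', nInv_skew (X := Y), nInv_skew (X := Y')]
  abel

lemma nInv_smul_right (hv : ∀ i j, ContDiff ℝ (⊤ : ℕ∞) (fun y => v y i j))
    (hf : ContDiff ℝ (⊤ : ℕ∞) f) (hY : SF Y) :
    nInv v X (fun y => f y • Y y) x = f x • nInv v X Y x := by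
  rw [nInv_skew, nInv_smul_left hv hf hY, nInv_skew (X := Y)]
  simp


lemma vapp_zero_fun : vapp v (fun _ => (0 : Fin m → ℝ)) = fun _ => 0 := by
  funext y i; simp [vapp]

lemma bracket_zero_left : bracket (fun _ => (0 : Fin m → ℝ)) Y x = 0 := by
  funext i; simp [bracket, pd]

lemma bracket_zero_right : bracket Y (fun _ => (0 : Fin m → ℝ)) x = 0 := by
  rw [bracket_skew, bracket_zero_left]; simp

lemma nInv_zero_left : nInv v (fun _ => (0 : Fin m → ℝ)) Y x = 0 := by
  rw [nInv_eq, vapp_zero_fun]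
  simp only [bracket_zero_left, bracket_zero_right, Matrix.mulVec_zero]
  abel

lemma SF.sumF {ι : Type*} {s : Finset ι} {W : ι → (Fin m → ℝ) → (Fin m → ℝ)}
    (h : ∀ i ∈ s, SF (W i)) : SF (fun y => ∑ i ∈ s, W i y) := by
  intro p
  simp only [Finset.sum_apply]
  exact ContDiff.sum fun i hi => h i hi p

lemma vapp_sum_smul_fun {ι : Type*} (s : Finset ι) (c : ι → (Fin m → ℝ) → ℝ)
    (W : ι → (Fin m → ℝ) → (Fin m → ℝ)) :
    vapp v (fun y => ∑ i ∈ s, c i y • W i y) = fun y => ∑ i ∈ s, c i y • vapp v (W i) y := by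
  funext y p
  simp only [vapp, Pi.smul_apply, Finset.sum_apply, smul_eq_mul, Finset.mul_sum]
  rw [Finset.sum_comm]
  exact Finset.sum_congr rfl fun j _ => Finset.sum_congr rfl fun i _ => by ring

lemma nInv_sum_smul_left (hv : ∀ i j, ContDiff ℝ (⊤ : ℕ∞) (fun y => v y i j))
    {ι : Type*} (s : Finset ι) (c : ι → (Fin m → ℝ) → ℝ)
    (W : ι → (Fin m → ℝ) → (Fin m → ℝ))
    (hc : ∀ i, ContDiff ℝ (⊤ : ℕ∞) (c i)) (hW : ∀ i, SF (W i)) :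
    nInv v (fun y => ∑ i ∈ s, c i y • W i y) Y x = ∑ i ∈ s, c i x • nInv v (W i) Y x := by
  classical
  induction s using Finset.induction with
  | empty => simpa using nInv_zero_left
  | insert a s hi ih =>
    simp only [Finset.sum_insert hi]
    rw [nInv_add_left hv (SF.smulF (hc a) (hW a)) (SF.sumF fun i _ => SF.smulF (hc i) (hW i)),
      nInv_smul_left hv (hc a) (hW a), ih]

lemma nInv_sum_smul_right (hv : ∀ i j, ContDiff ℝ (⊤ : ℕ∞) (fun y => v y i j))
    {ι : Type*} (s : Finset ι) (c : ι → (Fin m → ℝ) → ℝ)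
    (W : ι → (Fin m → ℝ) → (Fin m → ℝ))
    (hc : ∀ i, ContDiff ℝ (⊤ : ℕ∞) (c i)) (hW : ∀ i, SF (W i)) :
    nInv v X (fun y => ∑ i ∈ s, c i y • W i y) x = ∑ i ∈ s, c i x • nInv v X (W i) x := by
  rw [nInv_skew, nInv_sum_smul_left hv s c W hc hW]
  simp only [← Finset.sum_neg_distrib]
  exact Finset.sum_congr rfl fun i _ => by rw [nInv_skew (X := W i)]; simp


lemma mulVec_sumv {ι : Type*} (s : Finset ι) (A : Matrix (Fin m) (Fin m) ℝ)
    (w : ι → Fin m → ℝ) : A *ᵥ (∑ i ∈ s, w i) = ∑ i ∈ s, A *ᵥ w i := by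
  exact map_sum A.mulVecLin w s

lemma hInv_eq : hInv v X Y x
    = Matrix.of (v x) *ᵥ (Matrix.of (v x) *ᵥ nInv v X Y x)
      - Matrix.of (v x) *ᵥ nInv v (vapp v X) Y x
      - Matrix.of (v x) *ᵥ nInv v X (vapp v Y) x
      + nInv v (vapp v X) (vapp v Y) x := rfl

lemma hInv_skew : hInv v X Y x = - hInv v Y X x := by
  rw [hInv_eq, hInv_eq, nInv_skew (X := X) (Y := Y), nInv_skew (X := vapp v X) (Y := Y),
    nInv_skew (X := X) (Y := vapp v Y), nInv_skew (X := vapp v X) (Y := vapp v Y)]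
  simp only [Matrix.mulVec_neg]
  abel

lemma hInv_sum_smul_left (hv : ∀ i j, ContDiff ℝ (⊤ : ℕ∞) (fun y => v y i j))
    {ι : Type*} (s : Finset ι) (c : ι → (Fin m → ℝ) → ℝ)
    (W : ι → (Fin m → ℝ) → (Fin m → ℝ))
    (hc : ∀ i, ContDiff ℝ (⊤ : ℕ∞) (c i)) (hW : ∀ i, SF (W i)) :
    hInv v (fun y => ∑ i ∈ s, c i y • W i y) Y x = ∑ i ∈ s, c i x • hInv v (W i) Y x := by
  rw [hInv_eq, vapp_sum_smul_fun s c W,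
    nInv_sum_smul_left hv s c W hc hW,
    nInv_sum_smul_left hv s c (fun i => vapp v (W i)) hc (fun i => (hW i).vapp hv),
    nInv_sum_smul_left hv s c W hc hW,
    nInv_sum_smul_left hv s c (fun i => vapp v (W i)) hc (fun i => (hW i).vapp hv)]
  simp only [Finset.smul_sum.symm, mulVec_sumv, Matrix.mulVec_smul]
  rw [← Finset.sum_sub_distrib, ← Finset.sum_sub_distrib, ← Finset.sum_add_distrib]
  refine Finset.sum_congr rfl fun i _ => ?_
  rw [hInv_eq]
  simp only [Matrix.mulVec_smul, smul_sub, smul_add]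

lemma hInv_sum_smul_right (hv : ∀ i j, ContDiff ℝ (⊤ : ℕ∞) (fun y => v y i j))
    {ι : Type*} (s : Finset ι) (c : ι → (Fin m → ℝ) → ℝ)
    (W : ι → (Fin m → ℝ) → (Fin m → ℝ))
    (hc : ∀ i, ContDiff ℝ (⊤ : ℕ∞) (c i)) (hW : ∀ i, SF (W i)) :
    hInv v X (fun y => ∑ i ∈ s, c i y • W i y) x = ∑ i ∈ s, c i x • hInv v X (W i) x := by
  rw [hInv_skew, hInv_sum_smul_left hv s c W hc hW]
  rw [← Finset.sum_neg_distrib]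
  exact Finset.sum_congr rfl fun i _ => by rw [hInv_skew (X := W i)]; simp


lemma mulVec_eig {XX : (Fin m → ℝ) → (Fin m → ℝ)} {μ : (Fin m → ℝ) → ℝ}
    (h : vapp v XX x = μ x • XX x) : Matrix.of (v x) *ᵥ XX x = μ x • XX x :=
  (vapp_eq (X := XX)).symm.trans h

/-- Core computation: H(Xᵢ,Xⱼ) = 0 when N(Xᵢ,Xⱼ) = a•Xᵢ + b•Xⱼ pointwise. -/
lemma hbasis (hv : ∀ i j, ContDiff ℝ (⊤ : ℕ∞) (fun y => v y i j))
    (XX YY : (Fin m → ℝ) → (Fin m → ℝ)) (hXX : SF XX) (hYY : SF YY)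
    (μ ν : (Fin m → ℝ) → ℝ) (hμ : ContDiff ℝ (⊤ : ℕ∞) μ) (hν : ContDiff ℝ (⊤ : ℕ∞) ν)
    (heigX : ∀ y, vapp v XX y = μ y • XX y) (heigY : ∀ y, vapp v YY y = ν y • YY y)
    (a b : ℝ) (hn : nInv v XX YY x = a • XX x + b • YY x) :
    hInv v XX YY x = 0 := by
  have hVX : vapp v XX = fun y => μ y • XX y := funext heigX
  have hVY : vapp v YY = fun y => ν y • YY y := funext heigY
  rw [hInv_eq, hVX, hVY,
    nInv_smul_left hv hμ hXX, nInv_smul_right hv hν hYY,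
    nInv_smul_left hv hμ hXX, nInv_smul_right hv hν hYY, hn]
  simp only [Matrix.mulVec_add, Matrix.mulVec_smul, mulVec_eig (heigX x), mulVec_eig (heigY x),
    smul_add, smul_smul]
  module

end

section main
open Matrix

variable {m : ℕ}

lemma contDiff_det (M : (Fin m → ℝ) → Matrix (Fin m) (Fin m) ℝ)
    (h : ∀ p q, ContDiff ℝ (⊤ : ℕ∞) fun x => M x p q) : ContDiff ℝ (⊤ : ℕ∞) fun x => (M x).det := by
  simp only [Matrix.det_apply']
  exact ContDiff.sum fun σ _ => contDiff_const.mul (contDiff_prod fun p _ => h (σ p) p)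

/-- Decomposition of a smooth field in the smooth eigenbasis, with smooth coefficients. -/
lemma decompose (v : (Fin m → ℝ) → Fin m → Fin m → ℝ)
    (X : Fin m → (Fin m → ℝ) → (Fin m → ℝ))
    (hX : ∀ i p, ContDiff ℝ (⊤ : ℕ∞) (fun y => X i y p))
    (μ : Fin m → (Fin m → ℝ) → ℝ)
    (heig : ∀ i x, vapp v (X i) x = μ i x • X i x)
    (hne : ∀ i x, X i x ≠ 0)
    (hdist : ∀ i j x, i ≠ j → μ i x ≠ μ j x)
    (Y : (Fin m → ℝ) → (Fin m → ℝ)) (hY : ∀ p, ContDiff ℝ (⊤ : ℕ∞) (fun y => Y y p)) :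
    ∃ f : Fin m → (Fin m → ℝ) → ℝ, (∀ i, ContDiff ℝ (⊤ : ℕ∞) (f i)) ∧
      ∀ x, Y x = ∑ i, f i x • X i x := by
  classical
  set A : (Fin m → ℝ) → Matrix (Fin m) (Fin m) ℝ := fun x => Matrix.of fun p i => X i x p with hA
  have hunit : ∀ x, IsUnit (A x) := by
    intro x
    rw [← Matrix.linearIndependent_cols_iff_isUnit]
    have hli : LinearIndependent ℝ (fun i => X i x) := by
      apply Module.End.eigenvectors_linearIndependent' ((Matrix.of (v x)).mulVecLin)
        (fun i => μ i x) (fun i j hij => by_contra fun hne' => hdist i j x hne' hij)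
      intro i
      refine ⟨Module.End.mem_eigenspace_iff.mpr ?_, hne i x⟩
      show Matrix.of (v x) *ᵥ X i x = μ i x • X i x
      exact (vapp_eq).symm.trans (heig i x)
    have : (fun i => (A x)ᵀ i) = fun i => X i x := by
      funext i; funext p; rfl
    exact hli
  have hdet : ∀ x, (A x).det ≠ 0 := fun x => (Matrix.isUnit_iff_isUnit_det _ |>.mp (hunit x)).ne_zero
  refine ⟨fun i x => ((A x).det)⁻¹ * Matrix.cramer (A x) (Y x) i, fun i => ?_, fun x => ?_⟩
  · apply ContDiff.mul
    · exact (contDiff_det A fun p q => hX q p).inv hdet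
    · -- cramer (A x) (Y x) i = det (updateColumn (A x) i (Y x))
      have : (fun x => Matrix.cramer (A x) (Y x) i)
          = fun x => ((A x).updateCol i (Y x)).det := by
        funext x; rw [Matrix.cramer_apply]
      rw [this]
      apply contDiff_det
      intro p q
      by_cases hq : q = i
      · simpa [Matrix.updateCol_apply, hq] using hY p
      · simpa [Matrix.updateCol_apply, hq, hA] using hX q p
  · have key : A x *ᵥ (fun i => ((A x).det)⁻¹ * Matrix.cramer (A x) (Y x) i) = Y x := by
      have : (fun i => ((A x).det)⁻¹ * Matrix.cramer (A x) (Y x) i)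
          = ((A x).det)⁻¹ • Matrix.cramer (A x) (Y x) := rfl
      rw [this, Matrix.mulVec_smul, Matrix.mulVec_cramer, smul_smul,
        inv_mul_cancel₀ (hdet x), one_smul]
    have expand : ∀ p, (A x *ᵥ (fun i => ((A x).det)⁻¹ * Matrix.cramer (A x) (Y x) i)) p
        = (∑ i, (((A x).det)⁻¹ * Matrix.cramer (A x) (Y x) i) • X i x) p := by
      intro p
      simp only [Matrix.mulVec, dotProduct, Finset.sum_apply, Pi.smul_apply, smul_eq_mul]
      exact Finset.sum_congr rfl fun i _ => by rw [mul_comm]; rfl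
    funext p
    rw [← funext expand, key]

end main


/-- If V has m distinct eigenvalue functions with nonvanishing smooth eigenvector fields, and
N(Xᵢ,Xⱼ) lies pointwise in the span of Xᵢ and Xⱼ for all i ≠ j, then the Haantjes tensor of V
vanishes identically. -/
theorem stmt_6 {m : ℕ} (v : (Fin m → ℝ) → Fin m → Fin m → ℝ)
    (hv : ∀ i j, ContDiff ℝ (⊤ : ℕ∞) (fun y => v y i j))
    (X : Fin m → (Fin m → ℝ) → (Fin m → ℝ))
    (hX : ∀ i p, ContDiff ℝ (⊤ : ℕ∞) (fun y => X i y p))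
    (μ : Fin m → (Fin m → ℝ) → ℝ) (hμ : ∀ i, ContDiff ℝ (⊤ : ℕ∞) (μ i))
    (heig : ∀ i x, vapp v (X i) x = μ i x • X i x)
    (hne : ∀ i x, X i x ≠ 0)
    (hdist : ∀ i j x, i ≠ j → μ i x ≠ μ j x)
    (hspan : ∀ i j, i ≠ j → ∀ x,
      nInv v (X i) (X j) x ∈ Submodule.span ℝ {X i x, X j x}) :
    ∀ Y Z : (Fin m → ℝ) → (Fin m → ℝ),
      (∀ p, ContDiff ℝ (⊤ : ℕ∞) (fun y => Y y p)) → (∀ p, ContDiff ℝ (⊤ : ℕ∞) (fun y => Z y p)) →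
      ∀ x, hInv v Y Z x = 0 := by
  intro Y Z hY hZ x
  have hXs : ∀ i, SF (X i) := fun i => hX i
  have hNform : ∀ i j y, ∃ a b : ℝ, nInv v (X i) (X j) y = a • X i y + b • X j y := by
    intro i j y
    by_cases hij : i = j
    · subst hij
      refine ⟨0, 0, ?_⟩
      have hsk := nInv_skew (v := v) (X := X i) (Y := X i) (x := y)
      have h0 : nInv v (X i) (X i) y = 0 := by
        have h2 : (2 : ℝ) • nInv v (X i) (X i) y = 0 := by
          rw [two_smul]; nth_rewrite 2 [hsk]; abel
        simpa using (smul_eq_zero.mp h2).resolve_left (by norm_num)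
      rw [h0]; simp
    · obtain ⟨a, b, hab⟩ := Submodule.mem_span_pair.mp (hspan i j hij y)
      exact ⟨a, b, hab.symm⟩
  have hb : ∀ i j y, hInv v (X i) (X j) y = 0 := by
    intro i j y
    obtain ⟨a, b, hn⟩ := hNform i j y
    exact hbasis hv (X i) (X j) (hXs i) (hXs j) (μ i) (μ j) (hμ i) (hμ j)
      (heig i) (heig j) a b hn
  obtain ⟨f, hf, hfY⟩ := decompose v X hX μ heig hne hdist Y hY
  obtain ⟨g, hg, hgZ⟩ := decompose v X hX μ heig hne hdist Z hZ
  rw [funext hfY, funext hgZ,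
    hInv_sum_smul_left hv Finset.univ f X hf hXs]
  refine Finset.sum_eq_zero fun i _ => ?_
  rw [hInv_sum_smul_right hv Finset.univ g X hg hXs]
  rw [Finset.sum_eq_zero fun j _ => by rw [hb i j x]; simp]
  simp
end

section
/- For the 3×3 matrix pencil of the system (K), the dispersion relation det(λE − μ diag(a,b,c) − B) = 0, where B is the symmetric matrix with rows (γ²f'', γ, γδf''), (γ, 0, δ), (γδf'', δ, δ²f''), factorizes as (λ − bμ)·[(λ − aμ)(λ − cμ) − (γ² + δ²)(1 + f''(λ − bμ))] = 0, i.e., det(λE − μA − B) = (λ − bμ)[(λ − aμ)(λ − cμ) − (γ² + δ²)(1 + f''(λ − bμ))], provided (b−a)δ² + (b−c)γ² = 0. -/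
/-- Factorization of the dispersion relation for the system (K):
det(λE − μ diag(a,b,c) − B) = (λ−bμ)[(λ−aμ)(λ−cμ) − (γ²+δ²)(1 + f''(λ−bμ))],
where B is the symmetric matrix with rows (γ²f'', γ, γδf''), (γ, 0, δ), (γδf'', δ, δ²f''),
under the constraint (b−a)δ² + (b−c)γ² = 0. -/
theorem stmt_9 (a b c γ δ f2 lam mu : ℝ)
    (hcon : (b - a) * δ ^ 2 + (b - c) * γ ^ 2 = 0) :
    (lam • (1 : Matrix (Fin 3) (Fin 3) ℝ) - mu • Matrix.diagonal ![a, b, c]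
        - !![γ ^ 2 * f2, γ, γ * δ * f2; γ, 0, δ; γ * δ * f2, δ, δ ^ 2 * f2]).det
      = (lam - b * mu) *
        ((lam - a * mu) * (lam - c * mu) - (γ ^ 2 + δ ^ 2) * (1 + f2 * (lam - b * mu))) := by
  simp only [Matrix.det_fin_three, Matrix.sub_apply, Matrix.smul_apply, Matrix.one_apply,
    Matrix.diagonal_apply, Matrix.cons_val', Matrix.cons_val_zero, Matrix.cons_val_one,
    Matrix.head_cons, Matrix.empty_val', Matrix.cons_val_fin_one, Matrix.head_fin_const,
    Matrix.of_apply, Matrix.cons_val_two, Matrix.tail_cons]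
  norm_num [Fin.ext_iff]
  linear_combination (-mu * (1 + f2 * (lam - b * mu))) * hcon
end

section
/- Define, for a 3×3 Hessian B = (F_{ij}) and constants a > b > c: Δ = (b−c)F₁₁ + (c−a)F₂₂ + (a−b)F₃₃, I = Δ² + 4(c−a)(c−b)F₁₂² + 4(b−a)(b−c)F₁₃² + 4(a−b)(a−c)F₂₃², and J = (c−b)F₁₂²F₁₃² + (b−a)F₁₃²F₂₃² + (a−c)F₁₂²F₂₃² + F₁₂F₁₃F₂₃Δ. If F has the degenerate form F = u²(γu¹ + δu³) + f(γu¹ + δu³) with (b−a)δ² + (b−c)γ² = 0, then the quantities I and J satisfy the relation I² + 64(a−b)(b−c)(c−a)J = 0 identically. -/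
/-- For the degenerate potential F = u²(γu¹ + δu³) + f(γu¹ + δu³) with
(b−a)δ² + (b−c)γ² = 0, the integrals I and J satisfy I² + 64(a−b)(b−c)(c−a)J = 0. -/
theorem stmt_14 (a b c γ δ f2 : ℝ) (hab : b < a) (hbc : c < b)
    (hcon : (b - a) * δ ^ 2 + (b - c) * γ ^ 2 = 0)
    (F11 F12 F13 F22 F23 F33 Δ I J : ℝ)
    (hF11 : F11 = γ ^ 2 * f2) (hF12 : F12 = γ) (hF13 : F13 = γ * δ * f2)
    (hF22 : F22 = 0) (hF23 : F23 = δ) (hF33 : F33 = δ ^ 2 * f2)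
    (hΔ : Δ = (b - c) * F11 + (c - a) * F22 + (a - b) * F33)
    (hI : I = Δ ^ 2 + 4 * (c - a) * (c - b) * F12 ^ 2 + 4 * (b - a) * (b - c) * F13 ^ 2
      + 4 * (a - b) * (a - c) * F23 ^ 2)
    (hJ : J = (c - b) * F12 ^ 2 * F13 ^ 2 + (b - a) * F13 ^ 2 * F23 ^ 2
      + (a - c) * F12 ^ 2 * F23 ^ 2 + F12 * F13 * F23 * Δ) :
    I ^ 2 + 64 * (a - b) * (b - c) * (c - a) * J = 0 := by
  subst hF11 hF12 hF13 hF22 hF23 hF33 hΔ hI hJ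
  have hba : (b - a) ^ 4 ≠ 0 := pow_ne_zero _ (sub_ne_zero.mpr hab.ne)
  apply mul_left_cancel₀ hba
  rw [mul_zero]
  linear_combination ((-16)*b^4*c^3*F12^2 + (-8)*b^4*c^3*F12^4*f2^2 + (-1)*b^4*c^3*F12^6*f2^4 + (16)*b^5*c^2*F23^2 + (16)*b^5*c^2*F12^2 + (16)*b^5*c^2*F12^4*f2^2 + (3)*b^5*c^2*F12^4*F23^2*f2^4 + (3)*b^5*c^2*F12^6*f2^4 + (8)*b^6*c*F23^4*f2^2 + (-3)*b^6*c*F12^2*F23^4*f2^4 + (-8)*b^6*c*F12^4*f2^2 + (-6)*b^6*c*F12^4*F23^2*f2^4 + (-3)*b^6*c*F12^6*f2^4 + (1)*b^7*F23^6*f2^4 + (3)*b^7*F12^2*F23^4*f2^4 + (3)*b^7*F12^4*F23^2*f2^4 + (1)*b^7*F12^6*f2^4 + (64)*a*b^3*c^3*F12^2 + (32)*a*b^3*c^3*F12^4*f2^2 + (4)*a*b^3*c^3*F12^6*f2^4 + (-80)*a*b^4*c^2*F23^2 + (-32)*a*b^4*c^2*F12^2 + (-56)*a*b^4*c^2*F12^4*f2^2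 + (-15)*a*b^4*c^2*F12^4*F23^2*f2^4 + (-12)*a*b^4*c^2*F12^6*f2^4 + (-32)*a*b^5*c*F23^2 + (-48)*a*b^5*c*F23^4*f2^2 + (-32)*a*b^5*c*F12^2 + (18)*a*b^5*c*F12^2*F23^4*f2^4 + (16)*a*b^5*c*F12^4*f2^2 + (30)*a*b^5*c*F12^4*F23^2*f2^4 + (12)*a*b^5*c*F12^6*f2^4 + (-8)*a*b^6*F23^4*f2^2 + (-7)*a*b^6*F23^6*f2^4 + (-18)*a*b^6*F12^2*F23^4*f2^4 + (8)*a*b^6*F12^4*f2^2 + (-15)*a*b^6*F12^4*F23^2*f2^4 + (-4)*a*b^6*F12^6*f2^4 + (-96)*a^2*b^2*c^3*F12^2 + (-48)*a^2*b^2*c^3*F12^4*f2^2 + (-6)*a^2*b^2*c^3*F12^6*f2^4 + (160)*a^2*b^3*c^2*F23^2 + (-32)*a^2*b^3*c^2*F12^2 + (64)*a^2*b^3*c^2*F12^4*f2^2 + (30)*a^2*b^3*c^2*F12^4*F23^2*f2^4 + (18)*a^2*b^3*c^2*F12^6*f2^4 + (160)*a^2*b^4*c*F23^2 + (120)*a^2*b^4*c*F23^4*f2^2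 + (112)*a^2*b^4*c*F12^2 + (-45)*a^2*b^4*c*F12^2*F23^4*f2^4 + (16)*a^2*b^4*c*F12^4*f2^2 + (-60)*a^2*b^4*c*F12^4*F23^2*f2^4 + (-18)*a^2*b^4*c*F12^6*f2^4 + (16)*a^2*b^5*F23^2 + (48)*a^2*b^5*F23^4*f2^2 + (21)*a^2*b^5*F23^6*f2^4 + (16)*a^2*b^5*F12^2 + (45)*a^2*b^5*F12^2*F23^4*f2^4 + (-32)*a^2*b^5*F12^4*f2^2 + (30)*a^2*b^5*F12^4*F23^2*f2^4 + (6)*a^2*b^5*F12^6*f2^4 + (64)*a^3*b*c^3*F12^2 + (32)*a^3*b*c^3*F12^4*f2^2 + (4)*a^3*b*c^3*F12^6*f2^4 + (-160)*a^3*b^2*c^2*F23^2 + (128)*a^3*b^2*c^2*F12^2 + (-16)*a^3*b^2*c^2*F12^4*f2^2 + (-30)*a^3*b^2*c^2*F12^4*F23^2*f2^4 + (-12)*a^3*b^2*c^2*F12^6*f2^4 + (-320)*a^3*b^3*c*F23^2 + (-160)*a^3*b^3*c*F23^4*f2^2 + (-128)*a^3*b^3*c*F12^2 + (60)*a^3*b^3*c*F12^2*F23^4*f2^4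 + (-64)*a^3*b^3*c*F12^4*f2^2 + (60)*a^3*b^3*c*F12^4*F23^2*f2^4 + (12)*a^3*b^3*c*F12^6*f2^4 + (-80)*a^3*b^4*F23^2 + (-120)*a^3*b^4*F23^4*f2^2 + (-35)*a^3*b^4*F23^6*f2^4 + (-64)*a^3*b^4*F12^2 + (-60)*a^3*b^4*F12^2*F23^4*f2^4 + (48)*a^3*b^4*F12^4*f2^2 + (-30)*a^3*b^4*F12^4*F23^2*f2^4 + (-4)*a^3*b^4*F12^6*f2^4 + (-16)*a^4*c^3*F12^2 + (-8)*a^4*c^3*F12^4*f2^2 + (-1)*a^4*c^3*F12^6*f2^4 + (80)*a^4*b*c^2*F23^2 + (-112)*a^4*b*c^2*F12^2 + (-16)*a^4*b*c^2*F12^4*f2^2 + (15)*a^4*b*c^2*F12^4*F23^2*f2^4 + (3)*a^4*b*c^2*F12^6*f2^4 + (320)*a^4*b^2*c*F23^2 + (120)*a^4*b^2*c*F23^4*f2^2 + (32)*a^4*b^2*c*F12^2 + (-45)*a^4*b^2*c*F12^2*F23^4*f2^4 + (56)*a^4*b^2*c*F12^4*f2^2 + (-30)*a^4*b^2*c*F12^4*F23^2*f2^4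 + (-3)*a^4*b^2*c*F12^6*f2^4 + (160)*a^4*b^3*F23^2 + (160)*a^4*b^3*F23^4*f2^2 + (35)*a^4*b^3*F23^6*f2^4 + (96)*a^4*b^3*F12^2 + (45)*a^4*b^3*F12^2*F23^4*f2^4 + (-32)*a^4*b^3*F12^4*f2^2 + (15)*a^4*b^3*F12^4*F23^2*f2^4 + (1)*a^4*b^3*F12^6*f2^4 + (-16)*a^5*c^2*F23^2 + (32)*a^5*c^2*F12^2 + (8)*a^5*c^2*F12^4*f2^2 + (-3)*a^5*c^2*F12^4*F23^2*f2^4 + (-160)*a^5*b*c*F23^2 + (-48)*a^5*b*c*F23^4*f2^2 + (32)*a^5*b*c*F12^2 + (18)*a^5*b*c*F12^2*F23^4*f2^4 + (-16)*a^5*b*c*F12^4*f2^2 + (6)*a^5*b*c*F12^4*F23^2*f2^4 + (-160)*a^5*b^2*F23^2 + (-120)*a^5*b^2*F23^4*f2^2 + (-21)*a^5*b^2*F23^6*f2^4 + (-64)*a^5*b^2*F12^2 + (-18)*a^5*b^2*F12^2*F23^4*f2^4 + (8)*a^5*b^2*F12^4*f2^2 + (-3)*a^5*b^2*F12^4*F23^2*f2^4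 + (32)*a^6*c*F23^2 + (8)*a^6*c*F23^4*f2^2 + (-16)*a^6*c*F12^2 + (-3)*a^6*c*F12^2*F23^4*f2^4 + (80)*a^6*b*F23^2 + (48)*a^6*b*F23^4*f2^2 + (7)*a^6*b*F23^6*f2^4 + (16)*a^6*b*F12^2 + (3)*a^6*b*F12^2*F23^4*f2^4 + (-16)*a^7*F23^2 + (-8)*a^7*F23^4*f2^2 + (-1)*a^7*F23^6*f2^4) * hcon
end

section
/- Verification of an explicit solution of the double-wave system for a polytropic gas: the functions φ¹ = R¹ − R², φ² = R¹ − R² + π/2, ρ = exp(−2(R¹+R²)/(γ−1)) satisfy the system ∂₂φ¹ = cot((φ²−φ¹)/2)·(c'/c + cos(φ¹−φ²)/ρ)·∂₂ρ, ∂₁φ² = cot((φ¹−φ²)/2)·(c'/c + cos(φ¹−φ²)/ρ)·∂₁ρ, and ∂₁∂₂ρ = (∂₁ρ ∂₂ρ / sin²((φ¹−φ²)/2))·(c'/c · cos(φ¹−φ²) + (3 + cos 2(φ¹−φ²))/(4ρ)), where c² = γρ^{γ−1} so that c'/c = (γ−1)/(2ρ), and γ ≠ 1, γ > 0. -/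
open Real

/-- φ¹ = R¹ − R². -/
noncomputable def phi1 (R1 R2 : ℝ) : ℝ := R1 - R2

/-- φ² = R¹ − R² + π/2. -/
noncomputable def phi2 (R1 R2 : ℝ) : ℝ := R1 - R2 + Real.pi / 2

/-- ρ = exp(−2(R¹+R²)/(γ−1)). -/
noncomputable def rhoF (γ R1 R2 : ℝ) : ℝ := Real.exp (-2 * (R1 + R2) / (γ - 1))

lemma hasDerivAt_rho2 (γ x y : ℝ) :
    HasDerivAt (fun s => rhoF γ x s) (-2 / (γ - 1) * rhoF γ x y) y := by
  have h : HasDerivAt (fun s : ℝ => -2 * (x + s) / (γ - 1)) (-2 / (γ - 1)) y := by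
    have := ((hasDerivAt_id y).const_add x).const_mul (-2 : ℝ)
    have := this.div_const (γ - 1)
    simpa using this
  simpa [rhoF, mul_comm] using h.exp

lemma hasDerivAt_rho1 (γ x y : ℝ) :
    HasDerivAt (fun s => rhoF γ s y) (-2 / (γ - 1) * rhoF γ x y) x := by
  have h : HasDerivAt (fun s : ℝ => -2 * (s + y) / (γ - 1)) (-2 / (γ - 1)) x := by
    have := ((hasDerivAt_id x).add_const y).const_mul (-2 : ℝ)
    have := this.div_const (γ - 1)
    simpa using this
  simpa [rhoF, mul_comm] using h.exp

/-- The explicit functions φ¹, φ², ρ satisfy the double-wave system for a polytropic gas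
(with c'/c = (γ−1)/(2ρ)). -/
theorem stmt_16 (γ : ℝ) (hγ : 0 < γ) (hγ1 : γ ≠ 1) (R1 R2 : ℝ) :
    (deriv (fun s => phi1 R1 s) R2
      = (Real.cos ((phi2 R1 R2 - phi1 R1 R2) / 2) / Real.sin ((phi2 R1 R2 - phi1 R1 R2) / 2))
        * ((γ - 1) / (2 * rhoF γ R1 R2) + Real.cos (phi1 R1 R2 - phi2 R1 R2) / rhoF γ R1 R2)
        * deriv (fun s => rhoF γ R1 s) R2) ∧
    (deriv (fun s => phi2 s R2) R1
      = (Real.cos ((phi1 R1 R2 - phi2 R1 R2) / 2) / Real.sin ((phi1 R1 R2 - phi2 R1 R2) / 2))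
        * ((γ - 1) / (2 * rhoF γ R1 R2) + Real.cos (phi1 R1 R2 - phi2 R1 R2) / rhoF γ R1 R2)
        * deriv (fun s => rhoF γ s R2) R1) ∧
    (deriv (fun s => deriv (fun t => rhoF γ s t) R2) R1
      = deriv (fun s => rhoF γ s R2) R1 * deriv (fun t => rhoF γ R1 t) R2
          / (Real.sin ((phi1 R1 R2 - phi2 R1 R2) / 2)) ^ 2
        * ((γ - 1) / (2 * rhoF γ R1 R2) * Real.cos (phi1 R1 R2 - phi2 R1 R2)
          + (3 + Real.cos (2 * (phi1 R1 R2 - phi2 R1 R2))) / (4 * rhoF γ R1 R2))) := by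
  have hγ' : γ - 1 ≠ 0 := sub_ne_zero.mpr hγ1
  have hρ : rhoF γ R1 R2 ≠ 0 := (Real.exp_pos _).ne'
  have e12 : phi1 R1 R2 - phi2 R1 R2 = -(Real.pi / 2) := by simp [phi1, phi2]
  have e21 : phi2 R1 R2 - phi1 R1 R2 = Real.pi / 2 := by simp [phi1, phi2]
  have d2 : deriv (fun s => rhoF γ R1 s) R2 = -2 / (γ - 1) * rhoF γ R1 R2 :=
    (hasDerivAt_rho2 γ R1 R2).deriv
  have d1 : deriv (fun s => rhoF γ s R2) R1 = -2 / (γ - 1) * rhoF γ R1 R2 :=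
    (hasDerivAt_rho1 γ R1 R2).deriv
  refine ⟨?_, ?_, ?_⟩
  · have : deriv (fun s => phi1 R1 s) R2 = -1 := by
      simpa [phi1] using ((hasDerivAt_id R2).const_sub R1).deriv
    rw [this, e12, e21, d2]
    rw [show (Real.pi / 2) / 2 = Real.pi / 4 by ring]
    rw [Real.cos_pi_div_four, Real.sin_pi_div_four, Real.cos_neg, Real.cos_pi_div_two]
    field_simp
    ring
  · have : deriv (fun s => phi2 s R2) R1 = 1 := by
      simpa [phi2] using (((hasDerivAt_id R1).sub_const R2).add_const (Real.pi / 2)).deriv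
    rw [this, e12, d1]
    rw [show (-(Real.pi / 2)) / 2 = -(Real.pi / 4) by ring]
    rw [Real.cos_neg, Real.sin_neg, Real.cos_pi_div_four, Real.sin_pi_div_four,
      Real.cos_neg, Real.cos_pi_div_two]
    field_simp
    ring
  · have dd : deriv (fun s => deriv (fun t => rhoF γ s t) R2) R1
        = (-2 / (γ - 1)) * ((-2 / (γ - 1)) * rhoF γ R1 R2) := by
      have : (fun s => deriv (fun t => rhoF γ s t) R2)
          = fun s => -2 / (γ - 1) * rhoF γ s R2 := by
        funext s; exact (hasDerivAt_rho2 γ s R2).deriv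
      rw [this]
      exact ((hasDerivAt_rho1 γ R1 R2).const_mul _).deriv
    rw [dd, d1, d2, e12]
    rw [show (-(Real.pi / 2)) / 2 = -(Real.pi / 4) by ring,
      show 2 * -(Real.pi / 2) = -Real.pi by ring]
    rw [Real.sin_neg, Real.sin_pi_div_four, Real.cos_neg, Real.cos_pi_div_two,
      Real.cos_neg, Real.cos_pi]
    have hs : ((- (Real.sqrt 2 / 2)) : ℝ) ^ 2 = 1 / 2 := by
      rw [neg_pow]
      simp [div_pow, Real.sq_sqrt]
      norm_num
    rw [hs]
    field_simp
    ring
end
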